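/- Let k be a commutative ring containing the rationals, A an associative unital k-algebra, and ⋆ a formal deformation of A: an associative k[[ħ]]-bilinear product on A[[ħ]] such that 1 ⋆ x = x = x ⋆ 1 for all x ∈ A[[ħ]] and a ⋆ b ≡ a·b (mod ħ) for all a, b ∈ A. Then every idempotent P ∈ A (P·P = P) lifts to a ⋆-idempotent: there exists P̂ ∈ A[[ħ]] with P̂ ⋆ P̂ = P̂ and P̂ ≡ P (mod ħ). -/

import Mathlib

/-!
Newton's iteration `x ↦ 3x² − 2x³` for `x² = x` replaces the defect `d = x² − x` by
`d² (4d − 3)` and moves `x` by `(1 − 2x) d`. The `ħ`-adic order is superadditive under `⋆`, so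
starting from the constant series `P`, whose defect has order `≥ 1`, the `m`-th iterate has
defect of order `≥ 2ᵐ` and agrees with the next iterate up to order `2ᵐ`. The iterates therefore
converge coefficientwise, and the limit is a `⋆`-idempotent with constant coefficient `P`.
-/

open TensorProduct

noncomputable section

namespace Stmt

variable (k : Type*) [CommRing k] [Algebra ℚ k] (A : Type*) [Ring A] [Algebra k A]

/-- The `k[[ħ]]`-bilinear product on `A[[ħ]]` determined by a family of `k`-bilinear
maps `Cₗ : A × A → A`:  the coefficient of `ħⁿ` in `x ⋆ y` is
`Σ_{l+i+j=n} C_l (xᵢ, yⱼ)`. -/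
def starC (C : ℕ → A →ₗ[k] A →ₗ[k] A) (x y : PowerSeries A) : PowerSeries A :=
  PowerSeries.mk fun n =>
    ∑ p ∈ Finset.HasAntidiagonal.antidiagonal n, ∑ q ∈ Finset.HasAntidiagonal.antidiagonal p.2,
      C p.1 (PowerSeries.coeff q.1 x) (PowerSeries.coeff q.2 y)

end Stmt

section Newton

variable {R : Type*} [Ring R]

def newtonIdempotent (x : R) : R := 3 * x ^ 2 - 2 * x ^ 3

theorem newtonIdempotent_mul_self_sub (x : R) :
    newtonIdempotent x * newtonIdempotent x - newtonIdempotent x =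
      (x * x - x) * (x * x - x) * (4 * (x * x - x) - 3) := by
  unfold newtonIdempotent
  noncomm_ring

theorem newtonIdempotent_sub (x : R) :
    newtonIdempotent x - x = (1 - 2 * x) * (x * x - x) := by
  unfold newtonIdempotent
  noncomm_ring

variable {v : R → ℕ∞}

theorem two_mul_le_newtonIdempotent_mul_self_sub (hv : ∀ x y, v x + v y ≤ v (x * y)) {x : R}
    {n : ℕ∞} (hx : n ≤ v (x * x - x)) :
    2 * n ≤ v (newtonIdempotent x * newtonIdempotent x - newtonIdempotent x) := by
  rw [newtonIdempotent_mul_self_sub]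
  calc 2 * n = n + n + 0 := by rw [two_mul, add_zero]
    _ ≤ v (x * x - x) + v (x * x - x) + v (4 * (x * x - x) - 3) := by gcongr; exact zero_le
    _ ≤ _ := (add_le_add (hv _ _) le_rfl).trans (hv _ _)

theorem le_newtonIdempotent_sub (hv : ∀ x y, v x + v y ≤ v (x * y)) {x : R} {n : ℕ∞}
    (hx : n ≤ v (x * x - x)) : n ≤ v (newtonIdempotent x - x) := by
  rw [newtonIdempotent_sub]
  calc n = 0 + n := (zero_add n).symm
    _ ≤ v (1 - 2 * x) + v (x * x - x) := add_le_add zero_le hx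
    _ ≤ _ := hv _ _

theorem two_pow_mul_le_newtonIdempotent_iterate (hv : ∀ x y, v x + v y ≤ v (x * y)) {x : R}
    {n : ℕ∞} (hx : n ≤ v (x * x - x)) (m : ℕ) :
    2 ^ m * n ≤
      v (newtonIdempotent^[m] x * newtonIdempotent^[m] x - newtonIdempotent^[m] x) := by
  induction m with
  | zero => simpa using hx
  | succ m ih =>
    rw [Function.iterate_succ_apply', pow_succ', mul_assoc]
    exact two_mul_le_newtonIdempotent_mul_self_sub hv ih

theorem isIdempotentElem_of_forall_le_sub (hv_mul : ∀ x y, v x + v y ≤ v (x * y))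
    (hv_sub : ∀ x y, min (v x) (v y) ≤ v (x - y)) (hv_top : ∀ x, v x = ⊤ → x = 0)
    {e : ℕ → R} {L : R} (hL : ∀ m : ℕ, m ≤ v (e m - L))
    (he : ∀ m : ℕ, m ≤ v (e m * e m - e m)) : IsIdempotentElem L := by
  rw [IsIdempotentElem, ← sub_eq_zero]
  refine hv_top _ (top_le_iff.mp (ENat.forall_natCast_le_iff_le.mp fun m _ => ?_))
  have key : L * L - L = (e m * e m - e m) - (e m - 1) * (e m - L) - (e m - L) * L := by
    noncomm_ring
  rw [key]
  refine (le_min (le_min (he m) ?_) ?_).trans ((min_le_min_right _ (hv_sub _ _)).trans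
    (hv_sub _ _))
  · exact (hL m).trans (le_add_self.trans (hv_mul _ _))
  · exact (hL m).trans (le_self_add.trans (hv_mul _ _))

end Newton

namespace PowerSeries

variable {R : Type*} [Ring R]

theorem min_order_le_order_sub (x y : R⟦X⟧) : min x.order y.order ≤ (x - y).order := by
  simpa [sub_eq_add_neg, order_neg] using min_order_le_order_add x (-y)

theorem exists_forall_lt_order_sub_of_lt_order_succ_sub {e : ℕ → R⟦X⟧}
    (he : ∀ m : ℕ, (m : ℕ∞) < (e (m + 1) - e m).order) :
    ∃ L : R⟦X⟧, ∀ m : ℕ, (m : ℕ∞) < (e m - L).order := by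
  have stable : ∀ j m, j ≤ m → coeff j (e m) = coeff j (e j) := by
    intro j m hjm
    induction m, hjm using Nat.le_induction with
    | base => rfl
    | succ m hjm ih =>
      rw [← ih, ← sub_eq_zero, ← map_sub]
      exact coeff_of_lt_order _ ((Nat.cast_le.mpr hjm).trans_lt (he m))
  refine ⟨mk fun n => coeff n (e n), fun m => ?_⟩
  refine (ENat.add_one_le_iff (ENat.natCast_ne_top m)).mp (nat_le_order _ (m + 1) fun i hi => ?_)
  rw [map_sub, coeff_mk, stable i m (Nat.lt_succ_iff.mp hi), sub_self]

end PowerSeries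

namespace Stmt

section Deformation

open PowerSeries

variable {k A : Type*} [CommRing k] [Ring A] [Algebra k A] (C : ℕ → A →ₗ[k] A →ₗ[k] A)

theorem coeff_starC (x y : A⟦X⟧) (n : ℕ) :
    coeff n (starC k A C x y) =
      ∑ p ∈ Finset.HasAntidiagonal.antidiagonal n, ∑ q ∈ Finset.HasAntidiagonal.antidiagonal p.2,
        C p.1 (coeff q.1 x) (coeff q.2 y) :=
  coeff_mk _ _

theorem starC_add_left (x y z : A⟦X⟧) :
    starC k A C (x + y) z = starC k A C x z + starC k A C y z := by
  ext n
  simp only [coeff_starC, map_add, LinearMap.add_apply, Finset.sum_add_distrib]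

theorem starC_add_right (x y z : A⟦X⟧) :
    starC k A C x (y + z) = starC k A C x y + starC k A C x z := by
  ext n
  simp only [coeff_starC, map_add, Finset.sum_add_distrib]

theorem starC_zero_left (y : A⟦X⟧) : starC k A C 0 y = 0 := by
  ext n
  simp [coeff_starC]

theorem starC_zero_right (x : A⟦X⟧) : starC k A C x 0 = 0 := by
  ext n
  simp [coeff_starC]

theorem constantCoeff_starC (x y : A⟦X⟧) :
    constantCoeff (starC k A C x y) = C 0 (constantCoeff x) (constantCoeff y) := by
  rw [← coeff_zero_eq_constantCoeff_apply, coeff_starC]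
  simp

theorem le_order_starC (x y : A⟦X⟧) : x.order + y.order ≤ (starC k A C x y).order := by
  refine le_order _ _ fun n hn => ?_
  rw [coeff_starC]
  refine Finset.sum_eq_zero fun p hp => Finset.sum_eq_zero fun q hq => ?_
  rw [Finset.HasAntidiagonal.mem_antidiagonal] at hp hq
  rcases lt_or_ge (q.1 : ℕ∞) x.order with hx | hx
  · rw [coeff_of_lt_order _ hx, map_zero, LinearMap.zero_apply]
  rcases lt_or_ge (q.2 : ℕ∞) y.order with hy | hy
  · rw [coeff_of_lt_order _ hy, map_zero]
  refine absurd hn (not_lt.mpr ?_)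
  calc x.order + y.order ≤ q.1 + q.2 := add_le_add hx hy
    _ ≤ n := by exact_mod_cast (by omega : q.1 + q.2 ≤ n)

class IsUnitalAssociative : Prop where
  one_starC : ∀ x, starC k A C 1 x = x
  starC_one : ∀ x, starC k A C x 1 = x
  starC_assoc : ∀ x y z, starC k A C (starC k A C x y) z = starC k A C x (starC k A C y z)

/-- A type synonym for `A⟦X⟧`, so that it can carry the ring structure with product
`starC k A C`. -/
def Deformed (_C : ℕ → A →ₗ[k] A →ₗ[k] A) : Type _ := A⟦X⟧

namespace Deformed

instance : AddCommGroup (Deformed C) := inferInstanceAs (AddCommGroup A⟦X⟧)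

instance [IsUnitalAssociative C] : Ring (Deformed C) :=
  { (inferInstance : AddCommGroup (Deformed C)) with
    mul := starC k A C
    one := (1 : A⟦X⟧)
    mul_assoc := IsUnitalAssociative.starC_assoc
    one_mul := IsUnitalAssociative.one_starC
    mul_one := IsUnitalAssociative.starC_one
    left_distrib := starC_add_right C
    right_distrib := starC_add_left C
    zero_mul := starC_zero_left C
    mul_zero := starC_zero_right C }

variable {C} [IsUnitalAssociative C]

def order (x : Deformed C) : ℕ∞ := PowerSeries.order (x : A⟦X⟧)

theorem order_add_le_order_mul (x y : Deformed C) : x.order + y.order ≤ (x * y).order :=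
  le_order_starC C x y

theorem exists_isIdempotentElem_constantCoeff_eq {x : Deformed C} (hx : 1 ≤ (x * x - x).order) :
    ∃ L : Deformed C, IsIdempotentElem L ∧ constantCoeff L = constantCoeff x := by
  let e m := newtonIdempotent^[m] x
  have hdefect (m : ℕ) : 2 ^ m ≤ (e m * e m - e m).order := by
    simpa using two_pow_mul_le_newtonIdempotent_iterate order_add_le_order_mul hx m
  have hstep (m : ℕ) : (m : ℕ∞) < (e (m + 1) - e m).order := by
    rw [show e (m + 1) = newtonIdempotent (e m) from Function.iterate_succ_apply' _ _ _]
    refine lt_of_lt_of_le ?_ (le_newtonIdempotent_sub order_add_le_order_mul (hdefect m))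
    exact_mod_cast Nat.lt_two_pow_self
  obtain ⟨L, hL⟩ := PowerSeries.exists_forall_lt_order_sub_of_lt_order_succ_sub hstep
  refine ⟨L, isIdempotentElem_of_forall_le_sub order_add_le_order_mul
    (PowerSeries.min_order_le_order_sub (R := A)) (fun _ => PowerSeries.order_eq_top.mp)
    (fun m => (hL m).le) (fun m => le_trans ?_ (hdefect m)), ?_⟩
  · exact_mod_cast Nat.lt_two_pow_self.le
  · have h : coeff 0 (e 0) - coeff 0 L = 0 :=
      (map_sub _ _ _).symm.trans (coeff_of_lt_order 0 (hL 0))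
    rw [sub_eq_zero, coeff_zero_eq_constantCoeff_apply] at h
    exact h.symm.trans (coeff_zero_eq_constantCoeff_apply x)

end Deformed

end Deformation

variable (k : Type*) [CommRing k] [Algebra ℚ k] (A : Type*) [Ring A] [Algebra k A]

theorem idempotent_lifts
    (C : ℕ → A →ₗ[k] A →ₗ[k] A)
    (hC0 : C 0 = LinearMap.mul k A)
    (hunit_left : ∀ x : PowerSeries A, starC k A C 1 x = x)
    (hunit_right : ∀ x : PowerSeries A, starC k A C x 1 = x)
    (hassoc : ∀ x y z : PowerSeries A,
      starC k A C (starC k A C x y) z = starC k A C x (starC k A C y z)) :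
    ∀ P : A, P * P = P →
      ∃ Phat : PowerSeries A,
        starC k A C Phat Phat = Phat ∧ PowerSeries.constantCoeff Phat = P := by
  intro P hP
  have : IsUnitalAssociative C := ⟨hunit_left, hunit_right, hassoc⟩
  let x : Deformed C := PowerSeries.C P
  have hx : 1 ≤ (x * x - x).order := by
    refine PowerSeries.one_le_order_iff_constCoeff_eq_zero.mpr ?_
    change PowerSeries.constantCoeff (starC k A C (.C P) (.C P) - .C P) = 0
    simp [constantCoeff_starC, hC0, hP]
  obtain ⟨L, hL, hLx⟩ := Deformed.exists_isIdempotentElem_constantCoeff_eq hx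
  exact ⟨L, hL, hLx.trans (PowerSeries.constantCoeff_C P)⟩

end Stmt
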